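/- Let E be a real vector space of dimension 2q with q ≥ 1, let A : E → E be an ℝ-linear endomorphism, and let A^c be its complexification. If A^c(S̄) ⊆ S̄ for every q-dimensional complex subspace S ⊆ E^c of real index zero (equivalently, pr_S ∘ A^c ∘ pr_{S̄} = 0 with respect to the decomposition E^c = S ⊕ S̄), then A = c·Id_E for some real number c. -/

import Mathlib

open TensorProduct Complex Submodule Module

/-- The canonical inclusion `E → E^c = ℂ ⊗[ℝ] E` of a real vector space into its
complexification. -/
noncomputable def cplIncl (E : Type*) [AddCommGroup E] [Module ℝ E] : E →ₗ[ℝ] ℂ ⊗[ℝ] E :=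
  TensorProduct.mk ℝ ℂ E 1

/-- The conjugation `V ↦ V̄` of the complexification: the conjugate-linear involution
fixing `E ⊆ E^c`. -/
noncomputable def cplConj (E : Type*) [AddCommGroup E] [Module ℝ E] :
    ℂ ⊗[ℝ] E →ₗ[ℝ] ℂ ⊗[ℝ] E :=
  LinearMap.rTensor E Complex.conjAe.toLinearMap

/-- A complex subspace `S ⊆ E^c` has real index zero if `S ∩ S̄ = 0`, i.e. any `v ∈ S`
whose conjugate also lies in `S` (equivalently `v ∈ S ∩ S̄`) vanishes. -/
def RealIndexZero {E : Type*} [AddCommGroup E] [Module ℝ E]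
    (S : Submodule ℂ (ℂ ⊗[ℝ] E)) : Prop :=
  ∀ v ∈ S, cplConj E v ∈ S → v = 0

section Aux

variable {E : Type*} [AddCommGroup E] [Module ℝ E]

lemma cplConj_tmul (z : ℂ) (e : E) : cplConj E (z ⊗ₜ[ℝ] e) = (starRingEnd ℂ z) ⊗ₜ[ℝ] e := by
  simp [cplConj]

lemma cplConj_conj (t : ℂ ⊗[ℝ] E) : cplConj E (cplConj E t) = t := by
  induction t using TensorProduct.induction_on with
  | zero => simp
  | tmul z e => simp [cplConj_tmul]
  | add a b ha hb => simp [map_add, ha, hb]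

lemma cplConj_smul (z : ℂ) (t : ℂ ⊗[ℝ] E) :
    cplConj E (z • t) = (starRingEnd ℂ z) • cplConj E t := by
  induction t using TensorProduct.induction_on with
  | zero => simp
  | tmul w e => rw [smul_tmul', cplConj_tmul, cplConj_tmul, smul_tmul', smul_eq_mul, smul_eq_mul, map_mul]
  | add a b ha hb => simp [map_add, smul_add, ha, hb]

lemma cplConj_baseChange (A : E →ₗ[ℝ] E) (t : ℂ ⊗[ℝ] E) :
    cplConj E (LinearMap.baseChange ℂ A t) = LinearMap.baseChange ℂ A (cplConj E t) := by
  induction t using TensorProduct.induction_on with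
  | zero => simp
  | tmul w e => simp [cplConj_tmul]
  | add a b ha hb => simp [map_add, ha, hb]

/-- the real part projection `ℂ ⊗ E → E` along `(re, im)`. -/
noncomputable def reP (E : Type*) [AddCommGroup E] [Module ℝ E] : ℂ ⊗[ℝ] E →ₗ[ℝ] E :=
  TensorProduct.lift (LinearMap.mk₂ ℝ (fun (z : ℂ) (e : E) => z.re • e)
    (fun z w e => by simp [add_smul])
    (fun r z e => by simp [Complex.smul_re, mul_smul])
    (fun z e f => by simp [smul_add])
    (fun r z e => by rw [smul_comm]))

noncomputable def imP (E : Type*) [AddCommGroup E] [Module ℝ E] : ℂ ⊗[ℝ] E →ₗ[ℝ] E :=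
  TensorProduct.lift (LinearMap.mk₂ ℝ (fun (z : ℂ) (e : E) => z.im • e)
    (fun z w e => by simp [add_smul])
    (fun r z e => by simp [Complex.smul_im, mul_smul])
    (fun z e f => by simp [smul_add])
    (fun r z e => by rw [smul_comm]))

@[simp] lemma reP_tmul (z : ℂ) (e : E) : reP E (z ⊗ₜ[ℝ] e) = z.re • e := rfl
@[simp] lemma imP_tmul (z : ℂ) (e : E) : imP E (z ⊗ₜ[ℝ] e) = z.im • e := rfl
section Helpers

variable {M : Type*} [AddCommGroup M] [Module ℂ M] {q : ℕ}

lemma sum_elim_smul {α β : Type*} [Fintype α] [Fintype β]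
    (g : α ⊕ β → ℂ) (v : α → M) (w : β → M) :
    ∑ j : α ⊕ β, g j • Sum.elim v w j =
      (∑ k, g (Sum.inl k) • v k) + ∑ k, g (Sum.inr k) • w k := by
  rw [Fintype.sum_sum_type]
  simp

lemma sum_ite_single (b : Fin q → ℂ) (m : Fin q) (z : M) :
    ∑ k, b k • (if k = m then z else 0) = b m • z := by
  have : ∀ k : Fin q, b k • (if k = m then z else 0) = if k = m then b m • z else 0 := by
    intro k
    rcases eq_or_ne k m with rfl | hk
    · simp
    · simp [hk]
  rw [Finset.sum_congr rfl fun k _ => this k, Finset.sum_ite_eq' Finset.univ m fun _ => b m • z]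
  simp

lemma sum_update_smul (b : Fin q → ℂ) (v : Fin q → M) (m : Fin q) (z : M) :
    ∑ k, b k • Function.update v m (v m + z) k = (∑ k, b k • v k) + b m • z := by
  have : ∀ k : Fin q, Function.update v m (v m + z) k = v k + (if k = m then z else 0) := by
    intro k
    rcases eq_or_ne k m with rfl | hk
    · simp
    · simp [Function.update_of_ne hk, hk]
  rw [Finset.sum_congr rfl fun k _ => by rw [this k, smul_add]]
  rw [Finset.sum_add_distrib, sum_ite_single]

end Helpers

end Aux

section Core

variable {E : Type*} [AddCommGroup E] [Module ℝ E] {q : ℕ} {A : E →ₗ[ℝ] E}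

lemma core_mem
    (h : ∀ S : Submodule ℂ (ℂ ⊗[ℝ] E), finrank ℂ S = q → RealIndexZero S →
        ∀ v : ℂ ⊗[ℝ] E, cplConj E v ∈ S →
          cplConj E (LinearMap.baseChange ℂ A v) ∈ S)
    (v w : Fin q → ℂ ⊗[ℝ] E) (hvw : ∀ k, cplConj E (v k) = w k)
    (hli : LinearIndependent ℂ (Sum.elim v w)) (k0 : Fin q) :
    LinearMap.baseChange ℂ A (v k0) ∈ span ℂ (Set.range v) := by
  have hvli : LinearIndependent ℂ v := by
    have := hli.comp Sum.inl Sum.inl_injective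
    exact this
  have hfin : finrank ℂ (span ℂ (Set.range v)) = q := by
    rw [finrank_span_eq_card hvli, Fintype.card_fin]
  have hwv : ∀ k, cplConj E (w k) = v k := by
    intro k; rw [← hvw k, cplConj_conj]
  have hRIZ : RealIndexZero (span ℂ (Set.range v)) := by
    intro t ht hct
    obtain ⟨a, ha⟩ := mem_span_range_iff_exists_fun ℂ |>.1 ht
    obtain ⟨b, hb⟩ := mem_span_range_iff_exists_fun ℂ |>.1 hct
    have hconj : cplConj E t = ∑ k, (starRingEnd ℂ) (a k) • w k := by
      rw [← ha, map_sum]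
      exact Finset.sum_congr rfl fun k _ => by rw [cplConj_smul, hvw]
    have hzero : ∑ j : Fin q ⊕ Fin q,
        (Sum.elim b fun k => -((starRingEnd ℂ) (a k))) j • Sum.elim v w j = 0 := by
      rw [sum_elim_smul]
      simp only [Sum.elim_inl, Sum.elim_inr, neg_smul]
      rw [hb, Finset.sum_neg_distrib, ← hconj]
      simp
    have hg := Fintype.linearIndependent_iff.1 hli _ hzero
    have ha0 : ∀ k, a k = 0 := by
      intro k
      have := hg (Sum.inr k)
      simpa using this
    rw [← ha]
    simp [ha0]
  have hmem : cplConj E (w k0) ∈ span ℂ (Set.range v) := by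
    rw [hwv k0]; exact subset_span ⟨k0, rfl⟩
  have key := h _ hfin hRIZ (w k0) hmem
  rwa [cplConj_baseChange, hwv k0] at key

end Core

section StepB

variable {E : Type*} [AddCommGroup E] [Module ℝ E] {q : ℕ} [NeZero q] {A : E →ₗ[ℝ] E}

lemma stepB
    (h : ∀ S : Submodule ℂ (ℂ ⊗[ℝ] E), finrank ℂ S = q → RealIndexZero S →
        ∀ v : ℂ ⊗[ℝ] E, cplConj E v ∈ S →
          cplConj E (LinearMap.baseChange ℂ A v) ∈ S)
    (d : Basis (Fin q ⊕ Fin q) ℝ E) :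
    ∃ a b : ℝ, A (d (Sum.inl 0)) = a • d (Sum.inl 0) - b • d (Sum.inr 0) ∧
      A (d (Sum.inr 0)) = b • d (Sum.inl 0) + a • d (Sum.inr 0) := by
  classical
  set x := d (Sum.inl 0) with hx
  set y := d (Sum.inr 0) with hy
  set t : Fin q ⊕ Fin q → ℂ ⊗[ℝ] E := fun j => (1 : ℂ) ⊗ₜ[ℝ] d j with ht
  have htli : LinearIndependent ℂ t := by
    have h1 : t = ⇑(d.baseChange ℂ) := funext fun j => (Basis.baseChange_apply ℂ d j).symm
    rw [h1]
    exact (d.baseChange ℂ).linearIndependent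
  set v : Fin q → ℂ ⊗[ℝ] E := fun k => t (Sum.inl k) + Complex.I • t (Sum.inr k) with hv
  set w : Fin q → ℂ ⊗[ℝ] E := fun k => t (Sum.inl k) - Complex.I • t (Sum.inr k) with hw
  have hconj_t : ∀ j, cplConj E (t j) = t j := by
    intro j
    rw [ht]
    simp [cplConj_tmul]
  have hvw : ∀ k, cplConj E (v k) = w k := by
    intro k
    rw [hv, hw]
    simp only [map_add, cplConj_smul, hconj_t, Complex.conj_I, neg_smul, ← sub_eq_add_neg]
  have hwv : ∀ k, cplConj E (w k) = v k := fun k => by rw [← hvw k, cplConj_conj]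
  have hli : LinearIndependent ℂ (Sum.elim v w) := by
    rw [Fintype.linearIndependent_iff]
    intro g hg
    set g' : Fin q ⊕ Fin q → ℂ := Sum.elim (fun k => g (Sum.inl k) + g (Sum.inr k))
      (fun k => (g (Sum.inl k) - g (Sum.inr k)) * Complex.I) with hg'def
    have hsum : ∑ j, g' j • t j = ∑ j, g j • Sum.elim v w j := by
      rw [Fintype.sum_sum_type fun j => g' j • t j, sum_elim_smul,
        ← Finset.sum_add_distrib, ← Finset.sum_add_distrib]
      refine Finset.sum_congr rfl fun k _ => ?_
      simp only [hg'def, Sum.elim_inl, Sum.elim_inr, hv, hw]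
      module
    have hg0 := Fintype.linearIndependent_iff.1 htli g' (by rw [hsum, hg])
    intro j
    rcases j with k | k
    · have h1 : g (Sum.inl k) + g (Sum.inr k) = 0 := hg0 (Sum.inl k)
      have h2' : (g (Sum.inl k) - g (Sum.inr k)) * Complex.I = 0 := hg0 (Sum.inr k)
      have h2 : g (Sum.inl k) - g (Sum.inr k) = 0 := by
        rcases mul_eq_zero.1 h2' with h' | h'
        · exact h'
        · exact absurd h' Complex.I_ne_zero
      linear_combination (h1 + h2) / 2
    · have h1 : g (Sum.inl k) + g (Sum.inr k) = 0 := hg0 (Sum.inl k)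
      have h2' : (g (Sum.inl k) - g (Sum.inr k)) * Complex.I = 0 := hg0 (Sum.inr k)
      have h2 : g (Sum.inl k) - g (Sum.inr k) = 0 := by
        rcases mul_eq_zero.1 h2' with h' | h'
        · exact h'
        · exact absurd h' Complex.I_ne_zero
      linear_combination (h1 - h2) / 2
  have hmem1 := core_mem h v w hvw hli 0
  obtain ⟨a, ha⟩ := mem_span_range_iff_exists_fun ℂ |>.1 hmem1
  have ham : ∀ m : Fin q, m ≠ 0 → a m = 0 := by
    intro m hm
    set v' := Function.update v m (v m + w 0) with hv'
    set w' := Function.update w m (w m + v 0) with hw'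
    have hvw' : ∀ k, cplConj E (v' k) = w' k := by
      intro k
      rcases eq_or_ne k m with rfl | hk
      · rw [hv', hw']
        simp only [Function.update_self]
        rw [map_add, hvw, hwv]
      · rw [hv', hw']
        rw [Function.update_of_ne hk, Function.update_of_ne hk]
        exact hvw k
    have hli' : LinearIndependent ℂ (Sum.elim v' w') := by
      rw [Fintype.linearIndependent_iff]
      intro g hg
      have hsum : ∑ j, g j • Sum.elim v' w' j
          = ((∑ j, g j • Sum.elim v w j) + g (Sum.inl m) • w 0) + g (Sum.inr m) • v 0 := by
        rw [sum_elim_smul, sum_elim_smul]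
        simp only [Sum.elim_inl, Sum.elim_inr, hv', hw']
        rw [sum_update_smul (fun k => g (Sum.inl k)) v m (w 0),
          sum_update_smul (fun k => g (Sum.inr k)) w m (v 0)]
        abel
      set g' : Fin q ⊕ Fin q → ℂ := fun j => g j + (if j = Sum.inr 0 then g (Sum.inl m) else 0)
        + (if j = Sum.inl 0 then g (Sum.inr m) else 0) with hg'def
      have hgsum : ∑ j, g' j • Sum.elim v w j = 0 := by
        simp only [hg'def, add_smul, ite_smul, zero_smul]
        rw [Finset.sum_add_distrib, Finset.sum_add_distrib,
          Finset.sum_ite_eq' Finset.univ (Sum.inr (0 : Fin q))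
            (fun j => g (Sum.inl m) • Sum.elim v w j),
          Finset.sum_ite_eq' Finset.univ (Sum.inl (0 : Fin q))
            (fun j => g (Sum.inr m) • Sum.elim v w j)]
        simp only [Finset.mem_univ, if_true, Sum.elim_inr, Sum.elim_inl]
        rw [← hsum]
        exact hg
      have hg0 := Fintype.linearIndependent_iff.1 hli g' hgsum
      have hm1 : g (Sum.inl m) = 0 := by
        have := hg0 (Sum.inl m)
        simpa [hg'def, hm] using this
      have hm2 : g (Sum.inr m) = 0 := by
        have := hg0 (Sum.inr m)
        simpa [hg'def, hm] using this
      intro j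
      have := hg0 j
      simpa [hg'def, hm1, hm2] using this
    have hmem' := core_mem h v' w' hvw' hli' 0
    have hv'0 : v' 0 = v 0 := Function.update_of_ne (Ne.symm hm) _ _
    rw [hv'0] at hmem'
    obtain ⟨b, hb⟩ := mem_span_range_iff_exists_fun ℂ |>.1 hmem'
    have hbv : ∑ k, b k • v' k = (∑ k, b k • v k) + b m • w 0 :=
      sum_update_smul b v m (w 0)
    rw [hbv] at hb
    set g : Fin q ⊕ Fin q → ℂ := Sum.elim (fun k => a k - b k)
      (fun k => if k = 0 then -(b m) else 0) with hgdef
    have hgz : ∑ j, g j • Sum.elim v w j = 0 := by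
      rw [sum_elim_smul]
      simp only [hgdef, Sum.elim_inl, Sum.elim_inr, sub_smul, ite_smul, zero_smul]
      rw [Finset.sum_sub_distrib,
        Finset.sum_ite_eq' Finset.univ (0 : Fin q) (fun k => -(b m) • w k)]
      simp only [Finset.mem_univ, if_true]
      rw [ha, ← hb]
      module
    have hz := Fintype.linearIndependent_iff.1 hli g hgz
    have h1 : a m - b m = 0 := hz (Sum.inl m)
    have h2 : -(b m) = 0 := by
      have := hz (Sum.inr 0)
      simpa [hgdef] using this
    have hbm : b m = 0 := neg_eq_zero.1 h2
    linear_combination h1 + hbm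
  have hT : LinearMap.baseChange ℂ A (v 0) = a 0 • v 0 := by
    rw [← ha]
    rw [Finset.sum_eq_single (0 : Fin q)]
    · intro k _ hk
      rw [ham k hk, zero_smul]
    · intro hnot
      exact absurd (Finset.mem_univ _) hnot
  have EQ2 : (1 : ℂ) ⊗ₜ[ℝ] A x + Complex.I ⊗ₜ[ℝ] A y
      = (a 0) ⊗ₜ[ℝ] x + ((a 0) * Complex.I) ⊗ₜ[ℝ] y := by
    have := hT
    rw [hv] at this
    simp only [ht, map_add, map_smul, LinearMap.baseChange_tmul, smul_add, smul_smul,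
      smul_tmul', smul_eq_mul, mul_one] at this
    rw [← hx, ← hy] at this
    exact this
  have hre := congrArg (reP E) EQ2
  have him := congrArg (imP E) EQ2
  simp only [map_add, reP_tmul, imP_tmul, Complex.one_re, Complex.one_im, Complex.I_re,
    Complex.I_im, Complex.mul_I_re, Complex.mul_I_im, one_smul, zero_smul, add_zero, zero_add,
    neg_smul] at hre him
  refine ⟨(a 0).re, (a 0).im, ?_, ?_⟩
  · rw [sub_eq_add_neg]
    exact hre
  · exact him

end StepB

section BasisPair

variable {E : Type*} [AddCommGroup E] [Module ℝ E] [FiniteDimensional ℝ E] {q : ℕ} [NeZero q]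

lemma basis_pair (hdim : finrank ℝ E = 2 * q) {x y : E}
    (hxy : LinearIndependent ℝ ![x, y]) :
    ∃ d : Basis (Fin q ⊕ Fin q) ℝ E, d (Sum.inl 0) = x ∧ d (Sum.inr 0) = y := by
  classical
  have hne : x ≠ y := by
    by_contra heq
    have := (LinearIndependent.pair_iff.1 hxy 1 (-1) (by rw [heq]; module)).1
    exact one_ne_zero this
  have hrange : Set.range ![x, y] = {x, y} := by
    ext z
    simp [Matrix.range_cons, Matrix.range_empty, or_comm]
  have hs : LinearIndepOn ℝ id ({x, y} : Set E) := by
    have := hxy.linearIndepOn_id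
    rwa [hrange] at this
  set B := Basis.extend hs with hB
  haveI : Fintype (hs.extend (Set.subset_univ _)) := FiniteDimensional.fintypeBasisIndex B
  have hcard : Fintype.card (hs.extend (Set.subset_univ _)) = Fintype.card (Fin q ⊕ Fin q) := by
    rw [← Module.finrank_eq_card_basis B, hdim]
    simp [two_mul]
  set e0 := Fintype.equivOfCardEq hcard with he0
  have hxmem : x ∈ hs.extend (Set.subset_univ _) :=
    hs.subset_extend _ (by simp : x ∈ ({x, y} : Set E))
  have hymem : y ∈ hs.extend (Set.subset_univ _) :=
    hs.subset_extend _ (by simp : y ∈ ({x, y} : Set E))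
  set xh : hs.extend (Set.subset_univ _) := ⟨x, hxmem⟩ with hxh
  set yh : hs.extend (Set.subset_univ _) := ⟨y, hymem⟩ with hyh
  have hxyh : xh ≠ yh := fun hcon => hne (congrArg Subtype.val hcon)
  set e1 := e0.trans (Equiv.swap (e0 xh) (Sum.inl (0 : Fin q))) with he1
  have he1x : e1 xh = Sum.inl 0 := by simp [he1, Equiv.swap_apply_left]
  set e2 := e1.trans (Equiv.swap (e1 yh) (Sum.inr (0 : Fin q))) with he2
  have he1y_ne : e1 yh ≠ Sum.inl 0 := by
    rw [← he1x]
    exact fun hcon => hxyh (e1.injective hcon).symm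
  have he2x : e2 xh = Sum.inl 0 := by
    rw [he2]
    simp only [Equiv.trans_apply, he1x]
    exact Equiv.swap_apply_of_ne_of_ne (Ne.symm he1y_ne) (by simp)
  have he2y : e2 yh = Sum.inr 0 := by
    rw [he2]
    simp only [Equiv.trans_apply]
    exact Equiv.swap_apply_left _ _
  refine ⟨B.reindex e2, ?_, ?_⟩
  · rw [Basis.reindex_apply, ← he2x, Equiv.symm_apply_apply]
    exact Basis.extend_apply_self hs xh
  · rw [Basis.reindex_apply, ← he2y, Equiv.symm_apply_apply]
    exact Basis.extend_apply_self hs yh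

end BasisPair

/-- For `dim_ℝ E = 2q`, `q ≥ 1`: if an `ℝ`-linear endomorphism `A` of `E` is such that its
complexification `A^c` maps `S̄` into `S̄` for every `q`-dimensional complex subspace
`S ⊆ E^c` of real index zero (`v ∈ S̄` iff `v̄ ∈ S`), then `A = c·Id` for some `c ∈ ℝ`. -/
theorem eq_smul_id_of_baseChange_preserves_conj
    (E : Type*) [AddCommGroup E] [Module ℝ E] [FiniteDimensional ℝ E]
    (q : ℕ) (hq : 1 ≤ q) (hdim : finrank ℝ E = 2 * q)
    (A : E →ₗ[ℝ] E)
    (h : ∀ S : Submodule ℂ (ℂ ⊗[ℝ] E), finrank ℂ S = q → RealIndexZero S →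
        ∀ v : ℂ ⊗[ℝ] E, cplConj E v ∈ S →
          cplConj E (LinearMap.baseChange ℂ A v) ∈ S) :
    ∃ c : ℝ, A = c • LinearMap.id := by
  classical
  haveI : NeZero q := ⟨by omega⟩
  have claimP : ∀ x y : E, LinearIndependent ℝ ![x, y] →
      ∃ a b : ℝ, A x = a • x - b • y ∧ A y = b • x + a • y := by
    intro x y hxy
    obtain ⟨d, hdx, hdy⟩ := basis_pair hdim hxy
    obtain ⟨a, b, h1, h2⟩ := stepB h d
    exact ⟨a, b, by rwa [hdx, hdy] at h1, by rwa [hdx, hdy] at h2⟩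
  have claimQ : ∀ x y : E, LinearIndependent ℝ ![x, y] →
      ∃ a : ℝ, A x = a • x ∧ A y = a • y := by
    intro x y hxy
    obtain ⟨a, b, h1, h2⟩ := claimP x y hxy
    have hxy' : LinearIndependent ℝ ![x, x + y] := by
      rw [LinearIndependent.pair_iff] at hxy ⊢
      intro s t hst
      have h0 : (s + t) • x + t • y = 0 := by rw [← hst]; module
      obtain ⟨hst1, ht⟩ := hxy _ _ h0
      constructor
      · linarith
      · exact ht
    obtain ⟨a', b', h1', h2'⟩ := claimP x (x + y) hxy'
    have e1 : (a - a' + b') • x + (b' - b) • y = 0 := by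
      have h3 : (a - a' + b') • x + (b' - b) • y
          = (a • x - b • y) - (a' • x - b' • (x + y)) := by module
      rw [h3, ← h1, ← h1', sub_self]
    obtain ⟨ea, eb⟩ := LinearIndependent.pair_iff.1 hxy _ _ e1
    have e2' : A x + A y = b' • x + a' • (x + y) := by
      rw [← map_add]; exact h2'
    have e2 : (a + b - b' - a') • x + (a - b - a') • y = 0 := by
      have h4 : (a + b - b' - a') • x + (a - b - a') • y
          = ((a • x - b • y) + (b • x + a • y)) - (b' • x + a' • (x + y)) := by module
      rw [h4, ← h1, ← h2, e2', sub_self]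
    obtain ⟨ec, ed⟩ := LinearIndependent.pair_iff.1 hxy _ _ e2
    have hb0 : b = 0 := by linarith
    refine ⟨a, ?_, ?_⟩
    · rw [h1, hb0]; simp
    · rw [h2, hb0]; simp
  set bE := Module.finBasis ℝ E with hbE
  have hpair : ∀ i j : Fin (finrank ℝ E), i ≠ j → LinearIndependent ℝ ![bE i, bE j] := by
    intro i j hij
    have hinj : Function.Injective ![i, j] := by
      intro a b hab
      fin_cases a <;> fin_cases b <;> simp_all
    have hcomp : LinearIndependent ℝ (⇑bE ∘ ![i, j]) := bE.linearIndependent.comp ![i, j] hinj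
    have hfun : ⇑bE ∘ ![i, j] = ![bE i, bE j] := by
      funext k; fin_cases k <;> rfl
    rwa [hfun] at hcomp
  have h2q : 2 ≤ finrank ℝ E := by omega
  set i0 : Fin (finrank ℝ E) := ⟨0, by omega⟩ with hi0
  set i1 : Fin (finrank ℝ E) := ⟨1, by omega⟩ with hi1
  have hne01 : i0 ≠ i1 := by
    rw [hi0, hi1]
    exact Fin.ne_of_val_ne (by norm_num)
  obtain ⟨c, hc0, _⟩ := claimQ (bE i0) (bE i1) (hpair _ _ hne01)
  refine ⟨c, ?_⟩
  apply bE.ext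
  intro i
  have hgoal : (c • (LinearMap.id : E →ₗ[ℝ] E)) (bE i) = c • bE i := rfl
  rw [hgoal]
  rcases eq_or_ne i i0 with rfl | hi
  · exact hc0
  · obtain ⟨c', hc0', hci⟩ := claimQ (bE i0) (bE i) (hpair _ _ (Ne.symm hi))
    have hcc : c' = c := by
      have h5 : (c - c') • bE i0 = 0 := by
        rw [sub_smul, ← hc0, ← hc0', sub_self]
      rcases smul_eq_zero.1 h5 with h6 | h6
      · linarith [sub_eq_zero.1 h6]
      · exact absurd h6 (bE.ne_zero i0)
    rw [hci, hcc]
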